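/- Let H_SK = (p_x²+p_y²)/2 + (c/2)(x²+y²) + a x y² + (a/3)x³ and H_2 = p_x p_y + (a/3)(3x² y + y³) + c x y. Then {H_SK, H_2} = 0 for the canonical Poisson bracket on ℝ^4. -/

import Mathlib

noncomputable section

open Real Set

/-- Partial derivative w.r.t. the 1st argument. -/
def pd1 (F : ℝ → ℝ → ℝ → ℝ → ℝ) (x y z w : ℝ) : ℝ := deriv (fun t => F t y z w) x
/-- Partial derivative w.r.t. the 2nd argument. -/
def pd2 (F : ℝ → ℝ → ℝ → ℝ → ℝ) (x y z w : ℝ) : ℝ := deriv (fun t => F x t z w) y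
/-- Partial derivative w.r.t. the 3rd argument. -/
def pd3 (F : ℝ → ℝ → ℝ → ℝ → ℝ) (x y z w : ℝ) : ℝ := deriv (fun t => F x y t w) z
/-- Partial derivative w.r.t. the 4th argument. -/
def pd4 (F : ℝ → ℝ → ℝ → ℝ → ℝ) (x y z w : ℝ) : ℝ := deriv (fun t => F x y z t) w

/-- Canonical Poisson bracket on ℝ⁴ with coordinates (q₁, q₂, p₁, p₂). -/
def pb (F G : ℝ → ℝ → ℝ → ℝ → ℝ) (x y z w : ℝ) : ℝ :=
  pd1 F x y z w * pd3 G x y z w - pd3 F x y z w * pd1 G x y z w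
  + pd2 F x y z w * pd4 G x y z w - pd4 F x y z w * pd2 G x y z w

/-- The Sawada–Kotera Hénon–Heiles Hamiltonian (b = −a, c₁ = c₂ = c). -/
def HSK (a c : ℝ) : ℝ → ℝ → ℝ → ℝ → ℝ := fun x y px py =>
  (px ^ 2 + py ^ 2) / 2 + c / 2 * (x ^ 2 + y ^ 2) + a * x * y ^ 2 + a / 3 * x ^ 3

/-- The second integral of the SK Hénon–Heiles system. -/
def HSK2 (a c : ℝ) : ℝ → ℝ → ℝ → ℝ → ℝ := fun x y px py =>
  px * py + a / 3 * (3 * x ^ 2 * y + y ^ 3) + c * x * y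

lemma d1 (a c x y px py : ℝ) :
  deriv (fun t => HSK a c t y px py) x = c*x + a*y^2 + a*x^2 := by
  have h : HasDerivAt (fun t : ℝ => HSK a c t y px py) (c*x + a*y^2 + a*x^2) x := by
    have := ((((hasDerivAt_pow 2 x).add_const (y^2)).mul_const (c/2)).const_add ((px ^ 2 + py ^ 2)/2)).add
      ((((hasDerivAt_id x).const_mul a).mul_const (y^2)).add ((hasDerivAt_pow 3 x).mul_const (a/3)))
    convert this using 1
    case e'_8 => ext t; simp only [HSK, id_eq, Pi.add_apply]; ring
    case e'_9 => push_cast; ring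
    all_goals rfl
  exact h.deriv

lemma d2 (a c x y px py : ℝ) :
  deriv (fun t => HSK a c x t px py) y = c*y + 2*a*x*y := by
  have h : HasDerivAt (fun t : ℝ => HSK a c x t px py) (c*y + 2*a*x*y) y := by
    have := ((((hasDerivAt_pow 2 y).const_add (x^2)).mul_const (c/2)).const_add ((px ^ 2 + py ^ 2)/2)).add
      (((hasDerivAt_pow 2 y).const_mul (a*x)).add_const (a/3*x^3))
    convert this using 1
    case e'_8 => ext t; simp only [HSK, Pi.add_apply]; ring
    case e'_9 => push_cast; ring
    all_goals rfl
  exact h.deriv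

lemma d3 (a c x y px py : ℝ) :
  deriv (fun t => HSK a c x y t py) px = px := by
  have h : HasDerivAt (fun t : ℝ => HSK a c x y t py) px px := by
    have := (((hasDerivAt_pow 2 px).add_const (py^2)).div_const 2).add_const
      (c / 2 * (x ^ 2 + y ^ 2) + a * x * y ^ 2 + a / 3 * x ^ 3)
    convert this using 1
    case e'_8 => ext t; simp only [HSK]; ring
    case e'_9 => push_cast; ring
    all_goals rfl
  exact h.deriv

lemma d4 (a c x y px py : ℝ) :
  deriv (fun t => HSK a c x y px t) py = py := by
  have h : HasDerivAt (fun t : ℝ => HSK a c x y px t) py py := by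
    have := (((hasDerivAt_pow 2 py).const_add (px^2)).div_const 2).add_const
      (c / 2 * (x ^ 2 + y ^ 2) + a * x * y ^ 2 + a / 3 * x ^ 3)
    convert this using 1
    case e'_8 => ext t; simp only [HSK]; ring
    case e'_9 => push_cast; ring
    all_goals rfl
  exact h.deriv

lemma e1 (a c x y px py : ℝ) :
  deriv (fun t => HSK2 a c t y px py) x = 2*a*x*y + c*y := by
  have h : HasDerivAt (fun t : ℝ => HSK2 a c t y px py) (2*a*x*y + c*y) x := by
    have := (((((hasDerivAt_pow 2 x).const_mul 3).mul_const y).add_const (y^3)).const_mul (a/3)).add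
      (((hasDerivAt_id x).const_mul c).mul_const y) |>.const_add (px*py)
    convert this using 1
    case e'_8 => ext t; simp only [HSK2, id_eq, Pi.add_apply]; ring
    case e'_9 => push_cast; ring
    all_goals rfl
  exact h.deriv

lemma e2 (a c x y px py : ℝ) :
  deriv (fun t => HSK2 a c x t px py) y = a*x^2 + a*y^2 + c*x := by
  have h : HasDerivAt (fun t : ℝ => HSK2 a c x t px py) (a*x^2 + a*y^2 + c*x) y := by
    have := ((((hasDerivAt_id y).const_mul (3*x^2)).add (hasDerivAt_pow 3 y)).const_mul (a/3)).add
      ((hasDerivAt_id y).const_mul (c*x)) |>.const_add (px*py)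
    convert this using 1
    case e'_8 => ext t; simp only [HSK2, id_eq, Pi.add_apply]; ring
    case e'_9 => push_cast; ring
    all_goals rfl
  exact h.deriv

lemma e3 (a c x y px py : ℝ) :
  deriv (fun t => HSK2 a c x y t py) px = py := by
  have h : HasDerivAt (fun t : ℝ => HSK2 a c x y t py) py px := by
    have := (((hasDerivAt_id px).mul_const py).add_const
      (a / 3 * (3 * x ^ 2 * y + y ^ 3) + c * x * y))
    convert this using 1
    case e'_8 => ext t; simp only [HSK2, id_eq]; ring
    case e'_9 => ring
    all_goals rfl
  exact h.deriv

lemma e4 (a c x y px py : ℝ) :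
  deriv (fun t => HSK2 a c x y px t) py = px := by
  have h : HasDerivAt (fun t : ℝ => HSK2 a c x y px t) px py := by
    have := (((hasDerivAt_id py).const_mul px).add_const
      (a / 3 * (3 * x ^ 2 * y + y ^ 3) + c * x * y))
    convert this using 1
    case e'_8 => ext t; simp only [HSK2, id_eq]; ring
    case e'_9 => ring
    all_goals rfl
  exact h.deriv

theorem SK_HenonHeiles_integrable (a c : ℝ) :
    ∀ x y px py : ℝ, pb (HSK a c) (HSK2 a c) x y px py = 0 := by
  intro x y px py
  simp only [pb, pd1, pd2, pd3, pd4, d1, d2, d3, d4, e1, e2, e3, e4]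
  ring
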